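/- Tr(ρ_λ·[σ̂^z, Jσ̂^z]) = 2i·(|λ|²/μ²)·tanh(βμ). In particular, if λ ≠ 0 satisfies the gap equation tanh(βμ) = 2μ, then Tr(ρ_λ·[σ̂^z, Jσ̂^z]) = 4i·|λ|²/μ (the symplectic form σ_λ(σ̂^z, Jσ̂^z) = −i·Tr(ρ_λ·[σ̂^z, Jσ̂^z]) equals 4|λ|²/μ, expressing the bosonic character of the fluctuations of the pair). -/

import Mathlib

open Matrix

/-- Matrix exponential on 2×2 complex matrices. -/
noncomputable def mexp (A : Matrix (Fin 2) (Fin 2) ℂ) : Matrix (Fin 2) (Fin 2) ℂ :=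
  NormedSpace.exp A

/-- Pauli matrix σ^z. -/
def σz : Matrix (Fin 2) (Fin 2) ℂ := !![1, 0; 0, -1]
/-- Pauli matrix σ^+. -/
def σp : Matrix (Fin 2) (Fin 2) ℂ := !![0, 1; 0, 0]
/-- Pauli matrix σ^-. -/
def σm : Matrix (Fin 2) (Fin 2) ℂ := !![0, 0; 1, 0]

/-- μ = √(ε² + |λ|²). -/
noncomputable def μBCS (ε : ℝ) (l : ℂ) : ℝ := Real.sqrt (ε ^ 2 + ‖l‖ ^ 2)

/-- One-site effective Hamiltonian h_λ = ε·σ^z − λ·σ^+ − (conj λ)·σ^-. -/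
noncomputable def hBCS (ε : ℝ) (l : ℂ) : Matrix (Fin 2) (Fin 2) ℂ :=
  (ε : ℂ) • σz - l • σp - (starRingEnd ℂ l) • σm

/-- One-site Gibbs density matrix ρ_λ = exp(−β h_λ)/Tr exp(−β h_λ). -/
noncomputable def ρBCS (ε β : ℝ) (l : ℂ) : Matrix (Fin 2) (Fin 2) ℂ :=
  (Matrix.trace (mexp (-(β : ℂ) • hBCS ε l)))⁻¹ • mexp (-(β : ℂ) • hBCS ε l)

/-- Spectral projection P₊ = (1/2)(1 + h_λ/μ). -/
noncomputable def Pplus (ε : ℝ) (l : ℂ) : Matrix (Fin 2) (Fin 2) ℂ :=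
  (1 / 2 : ℂ) • (1 + (μBCS ε l : ℂ)⁻¹ • hBCS ε l)

/-- Spectral projection P₋ = (1/2)(1 − h_λ/μ). -/
noncomputable def Pminus (ε : ℝ) (l : ℂ) : Matrix (Fin 2) (Fin 2) ℂ :=
  (1 / 2 : ℂ) • (1 - (μBCS ε l : ℂ)⁻¹ • hBCS ε l)

/-- E₋(A) = P₋·A·P₊. -/
noncomputable def Eminus (ε : ℝ) (l : ℂ) (A : Matrix (Fin 2) (Fin 2) ℂ) :
    Matrix (Fin 2) (Fin 2) ℂ := Pminus ε l * A * Pplus ε l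

/-- E₀(A) = P₋·A·P₋ + P₊·A·P₊. -/
noncomputable def Ezero (ε : ℝ) (l : ℂ) (A : Matrix (Fin 2) (Fin 2) ℂ) :
    Matrix (Fin 2) (Fin 2) ℂ := Pminus ε l * A * Pminus ε l + Pplus ε l * A * Pplus ε l

/-- E₊(A) = P₊·A·P₋. -/
noncomputable def Eplus (ε : ℝ) (l : ℂ) (A : Matrix (Fin 2) (Fin 2) ℂ) :
    Matrix (Fin 2) (Fin 2) ℂ := Pplus ε l * A * Pminus ε l

/-- The complex structure map J(A) = i·(E₊(A) − E₋(A)). -/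
noncomputable def Jmap (ε : ℝ) (l : ℂ) (A : Matrix (Fin 2) (Fin 2) ℂ) :
    Matrix (Fin 2) (Fin 2) ℂ := Complex.I • (Eplus ε l A - Eminus ε l A)

/-- Reduced symmetry generator σ̂^z = (E₊ + E₋)(σ^z). -/
noncomputable def σhat (ε : ℝ) (l : ℂ) : Matrix (Fin 2) (Fin 2) ℂ :=
  Eplus ε l σz + Eminus ε l σz

/-- Canonical order parameter Jσ̂^z = i·(E₊ − E₋)(σ^z). -/
noncomputable def Jσhat (ε : ℝ) (l : ℂ) : Matrix (Fin 2) (Fin 2) ℂ :=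
  Jmap ε l σz

/-!
Since `h_λ² = μ²`, the matrices `P± = ½(1 ± h_λ/μ)` are complementary eigenprojections of `h_λ`,
so `ρ_λ` acts on them by the scalars `e^{∓βμ} / (2 cosh βμ)`. With `X = E₊(σ^z)` and
`Y = E₋(σ^z)` one has `[X + Y, i(X - Y)] = 2i(YX - XY)`; since `YX` starts with `P₋`, `XY` with
`P₊`, and `Tr(YX) = Tr(XY)`, the trace against `ρ_λ` is `2i tanh(βμ) Tr(XY)`, and a `2 × 2`
computation gives `Tr(XY) = |λ|²/μ²`.
-/

theorem NormedSpace.exp_mul_of_mul_eq_smul {𝕂 𝔸 : Type*} [RCLike 𝕂] [NormedRing 𝔸]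
    [NormedAlgebra 𝕂 𝔸] [CompleteSpace 𝔸] {a v : 𝔸} {c : 𝕂} (h : a * v = c • v) :
    NormedSpace.exp a * v = NormedSpace.exp c • v := by
  have hpow (n : ℕ) : a ^ n * v = c ^ n • v := by
    induction n with
    | zero => simp
    | succ n ih => rw [pow_succ', mul_assoc, ih, mul_smul_comm, h, smul_smul, pow_succ]
  refine ((exp_series_hasSum_exp' (𝕂 := 𝕂) a).mul_right v).unique ?_
  simpa only [smul_mul_assoc, hpow, smul_smul, smul_eq_mul] using
    (exp_series_hasSum_exp' (𝕂 := 𝕂) c).smul_const v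

section SpectralProjection

variable {𝕜 A : Type*} [Field 𝕜] [Ring A] [Algebra 𝕜 A]

def spectralProj (m : 𝕜) (h : A) : A := (1 / 2 : 𝕜) • (1 + m⁻¹ • h)

variable {m : 𝕜} {h : A}

theorem mul_spectralProj (hh : h * h = m ^ 2 • 1) (hm : m ≠ 0) :
    h * spectralProj m h = m • spectralProj m h := by
  simp only [spectralProj, mul_smul_comm, mul_add, mul_one, hh]
  match_scalars <;> field_simp

theorem spectralProj_mul_spectralProj_neg (hh : h * h = m ^ 2 • 1) (hm : m ≠ 0) :
    spectralProj m h * spectralProj (-m) h = 0 := by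
  simp only [spectralProj, smul_mul_smul_comm, add_mul, mul_add, one_mul, mul_one, hh]
  match_scalars <;> field_simp <;> ring

theorem spectralProj_add_spectralProj_neg [NeZero (2 : 𝕜)] (h : A) (m : 𝕜) :
    spectralProj m h + spectralProj (-m) h = 1 := by
  simp only [spectralProj]
  match_scalars <;> field_simp <;> ring

end SpectralProjection

namespace Matrix

variable {n : Type*} [Fintype n]

theorem trace_mul_commutator_of_mul_eq_smul {R : Type*} [CommRing R] {ρ P Q X : Matrix n n R}
    {a b : R} (hP : ρ * P = a • P) (hQ : ρ * Q = b • Q) :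
    trace (ρ * (Q * X * P * (P * X * Q) - P * X * Q * (Q * X * P))) =
      (b - a) * trace (P * X * Q * (Q * X * P)) := by
  have hQ' (Y : Matrix n n R) : ρ * (Q * X * P * Y) = b • (Q * X * P * Y) := by
    simp only [← Matrix.mul_assoc, hQ, smul_mul]
  have hP' (Y : Matrix n n R) : ρ * (P * X * Q * Y) = a • (P * X * Q * Y) := by
    simp only [← Matrix.mul_assoc, hP, smul_mul]
  rw [Matrix.mul_sub, trace_sub, hQ', hP', trace_smul, trace_smul, smul_eq_mul, smul_eq_mul,
    trace_mul_comm (Q * X * P), sub_mul]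

variable [DecidableEq n]

theorem trace_spectralProj {𝕜 : Type*} [Field 𝕜] {h : Matrix n n 𝕜} (htr : trace h = 0)
    (m : 𝕜) :
    trace (spectralProj m h) = Fintype.card n / 2 := by
  simp [spectralProj, trace_add, trace_smul, htr, div_eq_inv_mul]

variable {h : Matrix n n ℂ} {m : ℂ}

theorem exp_smul_mul_spectralProj (hh : h * h = m ^ 2 • 1) (hm : m ≠ 0) (t : ℂ) :
    NormedSpace.exp (t • h) * spectralProj m h = Complex.exp (t * m) • spectralProj m h := by
  rw [Complex.exp_eq_exp_ℂ]
  -- `exp` depends only on the topology, so any matrix norm gives access to the normed lemma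
  refine open scoped Matrix.Norms.Operator in NormedSpace.exp_mul_of_mul_eq_smul ?_
  rw [smul_mul_assoc, mul_spectralProj hh hm, smul_smul]

theorem trace_exp_smul_of_mul_self (hh : h * h = m ^ 2 • 1) (hm : m ≠ 0) (htr : trace h = 0)
    (t : ℂ) :
    trace (NormedSpace.exp (t • h)) = Fintype.card n * Complex.cosh (t * m) := by
  have hh' : h * h = (-m) ^ 2 • 1 := by rwa [neg_sq]
  calc trace (NormedSpace.exp (t • h))
      = trace (NormedSpace.exp (t • h) * (spectralProj m h + spectralProj (-m) h)) := by
        rw [spectralProj_add_spectralProj_neg, mul_one]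
    _ = Complex.exp (t * m) * (Fintype.card n / 2) +
          Complex.exp (-(t * m)) * (Fintype.card n / 2) := by
        rw [mul_add, exp_smul_mul_spectralProj hh hm,
          exp_smul_mul_spectralProj hh' (neg_ne_zero.2 hm), trace_add, trace_smul, trace_smul,
          trace_spectralProj htr, trace_spectralProj htr, mul_neg, smul_eq_mul, smul_eq_mul]
    _ = Fintype.card n * Complex.cosh (t * m) := by
        rw [Complex.cosh]; ring

theorem gibbs_mul_spectralProj (hh : h * h = m ^ 2 • 1) (hm : m ≠ 0) (htr : trace h = 0)
    (β : ℂ) :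
    (trace (NormedSpace.exp (-β • h)))⁻¹ • NormedSpace.exp (-β • h) * spectralProj m h =
      (Complex.exp (-(β * m)) / (Fintype.card n * Complex.cosh (β * m))) • spectralProj m h := by
  rw [smul_mul_assoc, exp_smul_mul_spectralProj hh hm, trace_exp_smul_of_mul_self hh hm htr,
    smul_smul, neg_mul, Complex.cosh_neg, inv_mul_eq_div]

end Matrix

section BCS

variable (ε : ℝ) (l : ℂ)

theorem hBCS_eq_of : hBCS ε l = !![(ε : ℂ), -l; -(starRingEnd ℂ l), -(ε : ℂ)] := by
  ext i j
  fin_cases i <;> fin_cases j <;> simp [hBCS, σz, σp, σm]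

theorem trace_hBCS : trace (hBCS ε l) = 0 := by
  simp [hBCS_eq_of, trace_fin_two]

theorem ofReal_μBCS_sq : (μBCS ε l : ℂ) ^ 2 = (ε : ℂ) ^ 2 + l * starRingEnd ℂ l := by
  rw [Complex.mul_conj, Complex.normSq_eq_norm_sq, μBCS, ← Complex.ofReal_pow,
    Real.sq_sqrt (by positivity)]
  push_cast
  ring

theorem hBCS_mul_self : hBCS ε l * hBCS ε l = (μBCS ε l : ℂ) ^ 2 • 1 := by
  rw [hBCS_eq_of, ofReal_μBCS_sq]
  ext i j
  fin_cases i <;> fin_cases j <;> simp [Matrix.mul_apply] <;> ring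

variable {ε}

theorem μBCS_pos (hε : 0 < ε) : 0 < μBCS ε l :=
  Real.sqrt_pos.2 (by positivity)

theorem Pplus_eq_spectralProj : Pplus ε l = spectralProj (μBCS ε l : ℂ) (hBCS ε l) := rfl

theorem Pminus_eq_spectralProj : Pminus ε l = spectralProj (-μBCS ε l : ℂ) (hBCS ε l) := by
  simp only [Pminus, spectralProj, inv_neg, neg_smul, sub_eq_add_neg]

theorem trace_Eplus_σz_mul_Eminus_σz (hε : 0 < ε) :
    trace (Eplus ε l σz * Eminus ε l σz) = (‖l‖ ^ 2 / μBCS ε l ^ 2 : ℝ) := by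
  have hμ : (μBCS ε l : ℂ) ≠ 0 := by exact_mod_cast (μBCS_pos l hε).ne'
  have hnorm : ((‖l‖ : ℝ) : ℂ) ^ 2 = l * starRingEnd ℂ l := by
    rw [Complex.mul_conj, Complex.normSq_eq_norm_sq]
    push_cast
    ring
  simp only [Eplus, Pplus, one_div, hBCS_eq_of, smul_of, smul_cons, smul_eq_mul, mul_neg,
    smul_empty, smul_add, σz, Pminus, Algebra.mul_smul_comm, Eminus, Algebra.smul_mul_assoc,
    trace_smul, trace_fin_two, Fin.isValue, Matrix.mul_apply, Matrix.add_apply, Matrix.smul_apply,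
    of_apply, cons_val', cons_val_fin_one, cons_val_zero, Fin.sum_univ_two, one_apply_eq, mul_one,
    ne_eq, zero_ne_one, not_false_eq_true, one_apply_ne, mul_zero, cons_val_one, zero_add, neg_mul,
    Matrix.sub_apply, neg_zero, add_zero, neg_neg, neg_sub, one_ne_zero, sub_neg_eq_add, sub_zero,
    neg_add_rev, Complex.ofReal_div, Complex.ofReal_pow]
  field_simp
  rw [hnorm]
  linear_combination (2 * ((μBCS ε l : ℂ) ^ 2 - (ε : ℂ) ^ 2 - l * starRingEnd ℂ l)) *
    ofReal_μBCS_sq ε l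

theorem commutator_σhat_Jσhat :
    σhat ε l * Jσhat ε l - Jσhat ε l * σhat ε l =
      (2 * Complex.I) • (Eminus ε l σz * Eplus ε l σz - Eplus ε l σz * Eminus ε l σz) := by
  rw [σhat, Jσhat, Jmap, mul_smul_comm, smul_mul_assoc, ← smul_sub, mul_comm, mul_smul]
  congr 1
  rw [two_smul]
  simp only [mul_add, add_mul, mul_sub, sub_mul]
  abel

variable (β : ℝ)

theorem ρBCS_mul_Pplus (hε : 0 < ε) :
    ρBCS ε β l * Pplus ε l =
      (Complex.exp (-(β * μBCS ε l)) / (2 * Complex.cosh (β * μBCS ε l))) • Pplus ε l := by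
  have hμ : (μBCS ε l : ℂ) ≠ 0 := by exact_mod_cast (μBCS_pos l hε).ne'
  rw [ρBCS, mexp, Pplus_eq_spectralProj,
    gibbs_mul_spectralProj (hBCS_mul_self ε l) hμ (trace_hBCS ε l)]
  norm_num

theorem ρBCS_mul_Pminus (hε : 0 < ε) :
    ρBCS ε β l * Pminus ε l =
      (Complex.exp (β * μBCS ε l) / (2 * Complex.cosh (β * μBCS ε l))) • Pminus ε l := by
  have hμ : (-μBCS ε l : ℂ) ≠ 0 := by exact_mod_cast neg_ne_zero.2 (μBCS_pos l hε).ne'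
  rw [ρBCS, mexp, Pminus_eq_spectralProj, gibbs_mul_spectralProj
    (by rw [neg_sq, hBCS_mul_self]) hμ (trace_hBCS ε l)]
  norm_num

theorem trace_ρBCS_mul_commutator (hε : 0 < ε) :
    trace (ρBCS ε β l * (σhat ε l * Jσhat ε l - Jσhat ε l * σhat ε l)) =
      2 * Complex.I * ((‖l‖ ^ 2 / μBCS ε l ^ 2 : ℝ) : ℂ) *
        ((Real.tanh (β * μBCS ε l) : ℝ) : ℂ) := by
  rw [commutator_σhat_Jσhat, mul_smul_comm, trace_smul, Eminus, Eplus,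
    trace_mul_commutator_of_mul_eq_smul (ρBCS_mul_Pplus l β hε) (ρBCS_mul_Pminus l β hε),
    ← Eminus, ← Eplus, trace_Eplus_σz_mul_Eminus_σz l hε, Complex.ofReal_tanh,
    Complex.tanh_eq_sinh_div_cosh, Complex.sinh, smul_eq_mul]
  push_cast
  ring

end BCS

theorem bcs_bosonic_commutator_general
    (ε β : ℝ) (hε : ε ∈ Set.Ioo (0 : ℝ) (1 / 2)) (l : ℂ) :
    Matrix.trace (ρBCS ε β l * (σhat ε l * Jσhat ε l - Jσhat ε l * σhat ε l)) =
      2 * Complex.I * ((‖l‖ ^ 2 / μBCS ε l ^ 2 : ℝ) : ℂ) *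
        ((Real.tanh (β * μBCS ε l) : ℝ) : ℂ) ∧
    (l ≠ 0 → Real.tanh (β * μBCS ε l) = 2 * μBCS ε l →
      Matrix.trace (ρBCS ε β l * (σhat ε l * Jσhat ε l - Jσhat ε l * σhat ε l)) =
        4 * Complex.I * ((‖l‖ ^ 2 / μBCS ε l : ℝ) : ℂ) ∧
      -Complex.I *
          Matrix.trace (ρBCS ε β l * (σhat ε l * Jσhat ε l - Jσhat ε l * σhat ε l)) =
        ((4 * ‖l‖ ^ 2 / μBCS ε l : ℝ) : ℂ)) := by
  have hμ : (μBCS ε l : ℂ) ≠ 0 := by exact_mod_cast (μBCS_pos l hε.1).ne'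
  have htrace := trace_ρBCS_mul_commutator l β hε.1
  refine ⟨htrace, fun _ hgap => ?_⟩
  have htrace_gap : Matrix.trace (ρBCS ε β l * (σhat ε l * Jσhat ε l - Jσhat ε l * σhat ε l)) =
      4 * Complex.I * ((‖l‖ ^ 2 / μBCS ε l : ℝ) : ℂ) := by
    rw [htrace, hgap]
    push_cast
    field_simp
    ring
  refine ⟨htrace_gap, ?_⟩
  rw [htrace_gap]
  push_cast
  linear_combination (-4 * ‖l‖ ^ 2 / μBCS ε l : ℂ) * Complex.I_sq

/-- Tr(ρ_λ·[σ̂^z, Jσ̂^z]) = 2i·(|λ|²/μ²)·tanh(βμ); if λ ≠ 0 satisfies the gap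
equation tanh(βμ) = 2μ, then Tr(ρ_λ·[σ̂^z, Jσ̂^z]) = 4i·|λ|²/μ, i.e. the symplectic form
σ_λ(σ̂^z, Jσ̂^z) = −i·Tr(ρ_λ·[σ̂^z, Jσ̂^z]) equals 4|λ|²/μ. -/
theorem bcs_bosonic_commutator
    (ε β : ℝ) (hε : ε ∈ Set.Ioo (0 : ℝ) (1 / 2)) (hβ : 0 < β) (l : ℂ) :
    Matrix.trace (ρBCS ε β l * (σhat ε l * Jσhat ε l - Jσhat ε l * σhat ε l)) =
      2 * Complex.I * ((‖l‖ ^ 2 / μBCS ε l ^ 2 : ℝ) : ℂ) *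
        ((Real.tanh (β * μBCS ε l) : ℝ) : ℂ) ∧
    (l ≠ 0 → Real.tanh (β * μBCS ε l) = 2 * μBCS ε l →
      Matrix.trace (ρBCS ε β l * (σhat ε l * Jσhat ε l - Jσhat ε l * σhat ε l)) =
        4 * Complex.I * ((‖l‖ ^ 2 / μBCS ε l : ℝ) : ℂ) ∧
      -Complex.I *
          Matrix.trace (ρBCS ε β l * (σhat ε l * Jσhat ε l - Jσhat ε l * σhat ε l)) =
        ((4 * ‖l‖ ^ 2 / μBCS ε l : ℝ) : ℂ)) :=
  bcs_bosonic_commutator_general ε β hε l
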